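/- Fundamental Commutation Lemma: suppose the connection ∇̂ on TM is torsion-free. For all i, j ≥ 0, u ∈ C∞(⊗^i TM), v ∈ C∞(⊗^j TM), and vector fields a, b ∈ C∞(TM), one has the equality of operators on C∞(E): ∇_{u_{(1)} ⊗ ∇̂_{u_{(2)}}((a⊗b − b⊗a)⊗v)} = (∇_{u_{(1)}} R^E)_{∇̂_{u_{(2)}}(a⊗b)} ∘ ∇_{u_{(3)} ⊗ ∇̂_{u_{(4)}} v} − ∇_{u_{(1)} ⊗ (∇̂_{u_{(2)}} R^{TM})_{∇̂_{u_{(3)}}(a⊗b)}(∇̂_{u_{(4)}} v)}, where iterated Sweedler notation for the tensor coproduct on u is used, the order of each higher covariant derivative is determined by the tensor degree of its subscript, ∇̂ is extended to tensor fields by the Leibniz rule, and the higher covariant derivatives of the curvature tensors R^E and R^{TM} are taken in the respective Hom bundles with their induced connections. -/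

import Mathlib

/-!
Algebraic framework for manifolds with connection:
`R` plays the role of the ring of smooth functions `C^∞(M)`,
`V` the `C^∞(M)`-module of smooth vector fields `C^∞(TM)`,
`VFAct` the action of vector fields on functions as derivations,
`Conn` a connection (covariant derivative) on the module of sections `E`
of a vector bundle, and `hcd` the higher covariant derivative defined
inductively by
`∇^{j+1}_{X₀,…,X_j} α = ∇_{X₀}(∇^j_{X₁,…,X_j} α) − Σ_k ∇^j_{X₁,…,∇̂_{X₀}X_k,…,X_j} α`.
-/

open TensorProduct

/-- The action of vector fields on smooth functions as (ℝ-linear) derivations. -/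
structure VFAct (R : Type*) [CommRing R] [Algebra ℝ R]
    (V : Type*) [AddCommGroup V] [Module R V] where
  act : V → R → R
  act_add_right : ∀ X f g, act X (f + g) = act X f + act X g
  act_mul_right : ∀ X f g, act X (f * g) = act X f * g + f * act X g
  act_add_left : ∀ X Y f, act (X + Y) f = act X f + act Y f
  act_smul_left : ∀ (f : R) X g, act (f • X) g = f * act X g
  act_algebraMap : ∀ X (r : ℝ), act X (algebraMap ℝ R r) = 0

/-- A connection (covariant derivative) on the `R = C^∞(M)`-module `E` of sections of a
smooth vector bundle, relative to the action `D` of vector fields on functions. -/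
structure Conn (R : Type*) [CommRing R] [Algebra ℝ R]
    (V : Type*) [AddCommGroup V] [Module R V]
    (E : Type*) [AddCommGroup E] [Module R E]
    (D : VFAct R V) where
  d : V → E → E
  d_add_right : ∀ X α β, d X (α + β) = d X α + d X β
  d_smul_right : ∀ X (f : R) α, d X (f • α) = D.act X f • α + f • d X α
  d_add_left : ∀ X Y α, d (X + Y) α = d X α + d Y α
  d_smul_left : ∀ (f : R) X α, d (f • X) α = f • d X α

variable {R : Type*} [CommRing R] [Algebra ℝ R]
variable {V : Type*} [AddCommGroup V] [Module R V]

/-- The higher covariant derivative `∇^j_{X₁,…,X_j}` along a tuple of vector fields,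
defined inductively by
`∇^{j+1}_{X₀,…,X_j} α = ∇_{X₀}(∇^j_{X₁,…,X_j} α) − Σ_k ∇^j_{X₁,…,∇̂_{X₀}X_k,…,X_j} α`. -/
def hcd {E : Type*} [AddCommGroup E] [Module R E] {D : VFAct R V}
    (cT : Conn R V V D) (cE : Conn R V E D) : (j : ℕ) → (Fin j → V) → E → E
  | 0, _, α => α
  | j + 1, X, α =>
      cE.d (X 0) (hcd cT cE j (fun k => X k.succ) α)
        - ∑ k : Fin j,
            hcd cT cE j (Function.update (fun m => X m.succ) k (cT.d (X 0) (X k.succ))) α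

/-- The connection `∇̂` is torsion-free: `∇̂_X Y − ∇̂_Y X = [X,Y]`, where the Lie bracket
is characterized by its action on functions. -/
def TorsionFree {D : VFAct R V} (cT : Conn R V V D) : Prop :=
  ∀ X Y f, D.act (cT.d X Y - cT.d Y X) f = D.act X (D.act Y f) - D.act Y (D.act X f)
/-!
Tensor-field machinery: `TensorAlgebra R V` plays the role of the space
`C^∞(⊗(TM))` of smooth contravariant tensor fields of globally finite order,
`comul` is the tensor coproduct `Δ` (the unique morphism of `R`-algebras with
`Δ X = X ⊗ 1 + 1 ⊗ X` for vector fields `X`), `IsDerivExt` says that a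
connection on an algebra of sections is the Leibniz extension of a connection
on its generators, `IsHigherDeriv` characterizes the tensorial extension
`v ↦ ∇^j_v` (for `v ∈ C^∞(⊗^j TM)`) of the higher covariant derivative, via
`∇^0_f = f·` and `∇^{j+1}_{X₀⊗w} = ∇_{X₀} ∘ ∇^j_w − ∇^j_{∇̂_{X₀} w}`,
and `IsHomConn` characterizes the induced connection on a Hom-bundle. -/

/-- The tensor coproduct on `C^∞(⊗(TM))`: the unique morphism of `R`-algebras
(for the tensor product) with `Δ X = X ⊗ 1 + 1 ⊗ X` for vector fields `X`. -/
noncomputable def comul (R : Type*) (V : Type*) [CommRing R] [AddCommGroup V] [Module R V] :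
    TensorAlgebra R V →ₐ[R] TensorAlgebra R V ⊗[R] TensorAlgebra R V :=
  TensorAlgebra.lift R
    { toFun := fun x => TensorAlgebra.ι R x ⊗ₜ[R] 1 + 1 ⊗ₜ[R] TensorAlgebra.ι R x
      map_add' := by
        intro x y
        simp only [map_add, TensorProduct.add_tmul, TensorProduct.tmul_add]
        abel
      map_smul' := by
        intro c x
        simp only [map_smul, RingHom.id_apply, TensorProduct.smul_tmul',
          TensorProduct.tmul_smul, smul_add] }

/-- `cB` is the Leibniz-rule extension of the connection `cE` to an algebra of sections `B`
generated by the image of `j : E → B`. -/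
structure IsDerivExt {R : Type*} [CommRing R] [Algebra ℝ R]
    {V : Type*} [AddCommGroup V] [Module R V]
    {E : Type*} [AddCommGroup E] [Module R E]
    {B : Type*} [Ring B] [Algebra R B] {D : VFAct R V}
    (cE : Conn R V E D) (cB : Conn R V B D) (j : E → B) : Prop where
  d_gen : ∀ X e, cB.d X (j e) = j (cE.d X e)
  d_mul : ∀ X a b, cB.d X (a * b) = cB.d X a * b + a * cB.d X b

/-- `N` is the tensorial extension `v ↦ ∇^j_v` of the higher covariant derivative of the
connection `cE`, where `v` ranges over tensor fields (`cA` is the Leibniz extension of the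
connection on `TM` to `⊗(TM)`).  It is `C^∞(M)`-linear (tensorial) in `v`, satisfies
`∇^0_f α = f • α`, the inductive formula
`∇_{X₀ ⊗ w} = ∇_{X₀} ∘ ∇_w − ∇_{∇̂_{X₀} w}`, and is ℝ-linear in the section. -/
structure IsHigherDeriv {R : Type*} [CommRing R] [Algebra ℝ R]
    {V : Type*} [AddCommGroup V] [Module R V]
    {E : Type*} [AddCommGroup E] [Module R E] {D : VFAct R V}
    (cE : Conn R V E D) (cA : Conn R V (TensorAlgebra R V) D)
    (N : TensorAlgebra R V →ₗ[R] E → E) : Prop where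
  n_algebraMap : ∀ (f : R) (α : E), N (algebraMap R (TensorAlgebra R V) f) α = f • α
  n_mul_ι : ∀ (X : V) (w : TensorAlgebra R V) (α : E),
      N (TensorAlgebra.ι R X * w) α = cE.d X (N w α) - N (cA.d X w) α
  n_add_right : ∀ v (α β : E), N v (α + β) = N v α + N v β
  n_smul_real : ∀ v (r : ℝ) (α : E), N v (algebraMap ℝ R r • α) = algebraMap ℝ R r • N v α

/-- `cH` is the connection on the Hom-bundle `Hom(E,F)` induced by `cE` and `cF`:
`(∇_X T)(α) = ∇^F_X (T α) − T (∇^E_X α)`. -/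
def IsHomConn {R : Type*} [CommRing R] [Algebra ℝ R]
    {V : Type*} [AddCommGroup V] [Module R V]
    {E : Type*} [AddCommGroup E] [Module R E]
    {F : Type*} [AddCommGroup F] [Module R F] {D : VFAct R V}
    (cE : Conn R V E D) (cF : Conn R V F D) (cH : Conn R V (E →ₗ[R] F) D) : Prop :=
  ∀ X T α, (cH.d X T) α = cF.d X (T α) - T (cE.d X α)

/-- The tensor coproduct, as a linear map. -/
noncomputable def comulL (R : Type*) (V : Type*) [CommRing R] [AddCommGroup V]
    [Module R V] :
    TensorAlgebra R V →ₗ[R] TensorAlgebra R V ⊗[R] TensorAlgebra R V :=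
  (comul R V).toLinearMap

/-- The three-fold iterated (Sweedler) coproduct
`u ↦ u₍₁₎ ⊗ (u₍₂₎ ⊗ (u₍₃₎ ⊗ u₍₄₎))`. -/
noncomputable def sweedler4 (R : Type*) (V : Type*) [CommRing R] [AddCommGroup V]
    [Module R V] :
    TensorAlgebra R V →ₗ[R]
      TensorAlgebra R V ⊗[R] (TensorAlgebra R V ⊗[R]
        (TensorAlgebra R V ⊗[R] TensorAlgebra R V)) :=
  (TensorProduct.map LinearMap.id
      (TensorProduct.map LinearMap.id (comulL R V))).comp
    ((TensorProduct.map LinearMap.id (comulL R V)).comp (comulL R V))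

set_option linter.unusedSectionVars false

/-! ### Auxiliary machinery -/

section AuxBasic

variable {R : Type*} [CommRing R] [Algebra ℝ R]
variable {V : Type*} [AddCommGroup V] [Module R V]
variable {D : VFAct R V}
variable {E : Type*} [AddCommGroup E] [Module R E]

theorem Conn.d_zero (c : Conn R V E D) (X : V) : c.d X 0 = 0 := by
  have h : c.d X 0 + c.d X 0 = c.d X 0 + 0 := by
    rw [← c.d_add_right, zero_add, add_zero]
  exact add_left_cancel h

theorem Conn.d_sub_right (c : Conn R V E D) (X : V) (α β : E) :
    c.d X (α - β) = c.d X α - c.d X β := by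
  have h : c.d X (α - β) + c.d X β = c.d X α := by
    rw [← c.d_add_right, sub_add_cancel]
  exact eq_sub_of_add_eq h

theorem Conn.d_sub_left (c : Conn R V E D) (X Y : V) (α : E) :
    c.d (X - Y) α = c.d X α - c.d Y α := by
  have h : X - Y = X + (-1 : R) • Y := by rw [neg_one_smul]; abel
  rw [h, c.d_add_left, c.d_smul_left, neg_one_smul, ← sub_eq_add_neg]

theorem VFAct.act_sub_left (X Y : V) (f : R) :
    D.act (X - Y) f = D.act X f - D.act Y f := by
  have h : X - Y = X + (-1 : R) • Y := by rw [neg_one_smul]; abel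
  rw [h, D.act_add_left, D.act_smul_left, neg_one_mul, ← sub_eq_add_neg]

theorem lmap_pi_add {M : Type*} [AddCommGroup M] [Module R M]
    (N : M →ₗ[R] E → E) (x y : M) (α : E) : N (x + y) α = N x α + N y α := by
  rw [map_add]; rfl

theorem lmap_pi_sub {M : Type*} [AddCommGroup M] [Module R M]
    (N : M →ₗ[R] E → E) (x y : M) (α : E) : N (x - y) α = N x α - N y α := by
  rw [map_sub]; rfl

theorem lmap_pi_zero {M : Type*} [AddCommGroup M] [Module R M]
    (N : M →ₗ[R] E → E) (α : E) : N 0 α = 0 := by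
  rw [map_zero]; rfl

theorem lmap_pi_smul {M : Type*} [AddCommGroup M] [Module R M]
    (N : M →ₗ[R] E → E) (f : R) (x : M) (α : E) : N (f • x) α = f • N x α := by
  rw [map_smul]; rfl

theorem IsDerivExt.d_one {E' : Type*} [AddCommGroup E'] [Module R E']
    {B : Type*} [Ring B] [Algebra R B]
    {cE' : Conn R V E' D} {cB : Conn R V B D} {j : E' → B}
    (h : IsDerivExt cE' cB j) (X : V) : cB.d X 1 = 0 := by
  have h1 := h.d_mul X 1 1
  simp only [mul_one, one_mul] at h1
  exact left_eq_add.mp h1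

end AuxBasic

section IHD

variable {R : Type*} [CommRing R] [Algebra ℝ R]
variable {V : Type*} [AddCommGroup V] [Module R V]
variable {D : VFAct R V}
variable {E : Type*} [AddCommGroup E] [Module R E]
variable {cT : Conn R V V D} {cE : Conn R V E D}
variable {cA : Conn R V (TensorAlgebra R V) D}

theorem ihd_one {N : TensorAlgebra R V →ₗ[R] E → E}
    (hN : IsHigherDeriv cE cA N) (α : E) : N 1 α = α := by
  have h := hN.n_algebraMap 1 α
  rwa [map_one, one_smul] at h

theorem ihd_iota {N : TensorAlgebra R V →ₗ[R] E → E}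
    (hN : IsHigherDeriv cE cA N) (hA : IsDerivExt cT cA (TensorAlgebra.ι R))
    (X : V) (α : E) : N (TensorAlgebra.ι R X) α = cE.d X α := by
  have h := hN.n_mul_ι X 1 α
  rw [mul_one, ihd_one hN, hA.d_one, lmap_pi_zero, sub_zero] at h
  exact h

theorem ihd_iota2 {N : TensorAlgebra R V →ₗ[R] E → E}
    (hN : IsHigherDeriv cE cA N) (hA : IsDerivExt cT cA (TensorAlgebra.ι R))
    (a b : V) (α : E) :
    N (TensorAlgebra.ι R a * TensorAlgebra.ι R b) α =
      cE.d a (cE.d b α) - cE.d (cT.d a b) α := by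
  rw [hN.n_mul_ι, ihd_iota hN hA, hA.d_gen, ihd_iota hN hA]

end IHD
section DerTensor

open TensorProduct

variable {R : Type*} [CommRing R]
variable {M : Type*} [AddCommGroup M] [Module R M]
variable {N : Type*} [AddCommGroup N] [Module R N]

/-- Leibniz extension of two additive "derivations with symbol `δ`" to the tensor product. -/
noncomputable def derTensor (δ : R → R) (dM : M →+ M) (dN : N →+ N)
    (hM : ∀ (r : R) (m : M), dM (r • m) = δ r • m + r • dM m)
    (hN : ∀ (r : R) (n : N), dN (r • n) = δ r • n + r • dN n) :
    M ⊗[R] N →+ M ⊗[R] N :=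
  TensorProduct.liftAddHom
    { toFun := fun m =>
        { toFun := fun n => dM m ⊗ₜ n + m ⊗ₜ dN n
          map_zero' := by simp
          map_add' := by
            intro n n'
            simp only [tmul_add, map_add]
            abel }
      map_zero' := by ext n; simp
      map_add' := by
        intro m m'
        ext n
        simp only [map_add, add_tmul, AddMonoidHom.coe_mk, ZeroHom.coe_mk,
          AddMonoidHom.add_apply]
        abel }
    (by
      intro r m n
      simp only [AddMonoidHom.coe_mk, ZeroHom.coe_mk, hM, hN, add_tmul, tmul_add,
        smul_tmul', tmul_smul]
      abel)

theorem derTensor_tmul (δ : R → R) (dM : M →+ M) (dN : N →+ N) (hM) (hN)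
    (m : M) (n : N) :
    derTensor δ dM dN hM hN (m ⊗ₜ n) = dM m ⊗ₜ n + m ⊗ₜ dN n := rfl

theorem derTensor_smul (δ : R → R) (dM : M →+ M) (dN : N →+ N) (hM) (hN)
    (r : R) (t : M ⊗[R] N) :
    derTensor δ dM dN hM hN (r • t) = δ r • t + r • derTensor δ dM dN hM hN t := by
  induction t using TensorProduct.induction_on with
  | zero => simp
  | tmul m n =>
    rw [smul_tmul']
    simp only [derTensor_tmul, hM, add_tmul, smul_tmul', smul_add]
    abel
  | add s t hs ht =>
    rw [smul_add, map_add, hs, ht, map_add, smul_add, smul_add]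
    abel

end DerTensor

section ProdIota

variable {R : Type*} [CommRing R] [Algebra ℝ R]
variable {V : Type*} [AddCommGroup V] [Module R V]
variable {D : VFAct R V}

/-- The product of the generators indexed by a list. -/
noncomputable def prodIota (R : Type*) {V : Type*} [CommRing R] [AddCommGroup V]
    [Module R V] (l : List V) : TensorAlgebra R V :=
  (l.map (TensorAlgebra.ι R)).prod

theorem prodIota_nil : prodIota R ([] : List V) = 1 := by
  simp [prodIota]

theorem prodIota_cons (a : V) (l : List V) :
    prodIota R (a :: l) = TensorAlgebra.ι R a * prodIota R l := by
  simp [prodIota]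

theorem prodIota_append (l l' : List V) :
    prodIota R (l ++ l') = prodIota R l * prodIota R l' := by
  simp [prodIota]

theorem span_prodIota_top (x : TensorAlgebra R V) :
    x ∈ Submodule.span R {w : TensorAlgebra R V | ∃ l : List V, w = prodIota R l} := by
  induction x using TensorAlgebra.induction with
  | algebraMap r =>
    rw [Algebra.algebraMap_eq_smul_one, ← prodIota_nil (R := R) (V := V)]
    exact Submodule.smul_mem _ r (Submodule.subset_span ⟨[], rfl⟩)
  | ι x =>
    have : TensorAlgebra.ι R x = prodIota R [x] := by simp [prodIota]
    exact this ▸ Submodule.subset_span ⟨[x], rfl⟩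
  | mul a b ha hb =>
    refine Submodule.span_induction (p := fun y _ => y * b ∈ Submodule.span R _)
      ?_ ?_ ?_ ?_ ha
    · rintro y ⟨l, rfl⟩
      refine Submodule.span_induction (p := fun z _ => prodIota R l * z ∈ Submodule.span R _)
        ?_ ?_ ?_ ?_ hb
      · rintro z ⟨l', rfl⟩
        exact Submodule.subset_span ⟨l ++ l', (prodIota_append l l').symm⟩
      · rw [mul_zero]; exact Submodule.zero_mem _
      · intro z z' _ _ hz hz'
        rw [mul_add]; exact Submodule.add_mem _ hz hz'
      · intro r z _ hz
        rw [mul_smul_comm]; exact Submodule.smul_mem _ _ hz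
    · rw [zero_mul]; exact Submodule.zero_mem _
    · intro y y' _ _ hy hy'
      rw [add_mul]; exact Submodule.add_mem _ hy hy'
    · intro r y _ hy
      rw [smul_mul_assoc]; exact Submodule.smul_mem _ _ hy
  | add a b ha hb => exact Submodule.add_mem _ ha hb

theorem dA_prodIota_mem {cT : Conn R V V D} {cA : Conn R V (TensorAlgebra R V) D}
    (hA : IsDerivExt cT cA (TensorAlgebra.ι R)) (X : V) (l : List V) :
    cA.d X (prodIota R l) ∈
      Submodule.span R
        {w : TensorAlgebra R V | ∃ l' : List V, l'.length = l.length ∧ w = prodIota R l'} := by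
  induction l with
  | nil =>
    rw [prodIota_nil, hA.d_one]
    exact Submodule.zero_mem _
  | cons a l ih =>
    rw [prodIota_cons, hA.d_mul, hA.d_gen, ← prodIota_cons]
    refine Submodule.add_mem _ (Submodule.subset_span ⟨cT.d X a :: l, by simp, rfl⟩) ?_
    refine Submodule.span_induction
      (p := fun y _ => TensorAlgebra.ι R a * y ∈ Submodule.span R
        {w : TensorAlgebra R V | ∃ l' : List V, l'.length = (a :: l).length ∧ w = prodIota R l'})
      ?_ ?_ ?_ ?_ ih
    · rintro y ⟨l', hl', rfl⟩
      exact Submodule.subset_span ⟨a :: l', by simp [hl'], (prodIota_cons a l').symm⟩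
    · rw [mul_zero]; exact Submodule.zero_mem _
    · intro y y' _ _ hy hy'
      rw [mul_add]; exact Submodule.add_mem _ hy hy'
    · intro r y _ hy
      rw [mul_smul_comm]; exact Submodule.smul_mem _ _ hy

/-- Uniqueness of linear maps satisfying the basic covariant-derivative recursion. -/
theorem rec_unique {E : Type*} [AddCommGroup E] [Module R E]
    {cT : Conn R V V D} {cA : Conn R V (TensorAlgebra R V) D}
    (hA : IsDerivExt cT cA (TensorAlgebra.ι R)) (cE : Conn R V E D)
    (F G : TensorAlgebra R V →ₗ[R] E)
    (h1 : F 1 = G 1)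
    (hF : ∀ (X : V) (w : TensorAlgebra R V),
      F (TensorAlgebra.ι R X * w) = cE.d X (F w) - F (cA.d X w))
    (hG : ∀ (X : V) (w : TensorAlgebra R V),
      G (TensorAlgebra.ι R X * w) = cE.d X (G w) - G (cA.d X w)) :
    F = G := by
  have claim : ∀ n : ℕ, ∀ w ∈ Submodule.span R
      {w : TensorAlgebra R V | ∃ l : List V, l.length ≤ n ∧ w = prodIota R l},
      F w = G w := by
    intro n
    induction n with
    | zero =>
      intro w hw
      refine Submodule.span_induction (p := fun w _ => F w = G w) ?_ ?_ ?_ ?_ hw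
      · rintro w ⟨l, hl, rfl⟩
        have : l = [] := List.length_eq_zero_iff.mp (Nat.le_zero.mp hl)
        subst this
        rw [prodIota_nil]; exact h1
      · simp
      · intro x y _ _ hx hy; rw [map_add, map_add, hx, hy]
      · intro r x _ hx; rw [map_smul, map_smul, hx]
    | succ n ih =>
      intro w hw
      refine Submodule.span_induction (p := fun w _ => F w = G w) ?_ ?_ ?_ ?_ hw
      · rintro w ⟨l, hl, rfl⟩
        match l with
        | [] => rw [prodIota_nil]; exact h1
        | a :: l =>
          have hl' : l.length ≤ n := by
            simpa using Nat.succ_le_succ_iff.mp (by simpa using hl)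
          rw [prodIota_cons, hF, hG]
          have e1 : F (prodIota R l) = G (prodIota R l) :=
            ih _ (Submodule.subset_span ⟨l, hl', rfl⟩)
          have e2 : F (cA.d a (prodIota R l)) = G (cA.d a (prodIota R l)) := by
            refine ih _ (Submodule.span_mono ?_ (dA_prodIota_mem hA a l))
            rintro w ⟨l', hlen, rfl⟩
            exact ⟨l', by omega, rfl⟩
          rw [e1, e2]
      · simp
      · intro x y _ _ hx hy; rw [map_add, map_add, hx, hy]
      · intro r x _ hx; rw [map_smul, map_smul, hx]
  ext w
  refine Submodule.span_induction (p := fun w _ => F w = G w) ?_ ?_ ?_ ?_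
    (span_prodIota_top w)
  · rintro w ⟨l, rfl⟩
    exact claim l.length _ (Submodule.subset_span ⟨l, le_refl _, rfl⟩)
  · simp
  · intro x y _ _ hx hy; rw [map_add, map_add, hx, hy]
  · intro r x _ hx; rw [map_smul, map_smul, hx]

end ProdIota
set_option maxHeartbeats 1000000
set_option synthInstance.maxHeartbeats 1000000

section CoLeibniz

open TensorProduct

variable {R : Type*} [CommRing R] [Algebra ℝ R]
variable {V : Type*} [AddCommGroup V] [Module R V]
variable {D : VFAct R V}

/-- The covariant derivative as an additive map. -/
noncomputable def connAdd {E : Type*} [AddCommGroup E] [Module R E]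
    (c : Conn R V E D) (X : V) : E →+ E :=
  AddMonoidHom.mk' (c.d X) (c.d_add_right X)

theorem connAdd_apply {E : Type*} [AddCommGroup E] [Module R E]
    (c : Conn R V E D) (X : V) (e : E) : connAdd c X e = c.d X e := rfl

theorem connAdd_smul {E : Type*} [AddCommGroup E] [Module R E]
    (c : Conn R V E D) (X : V) (r : R) (e : E) :
    connAdd c X (r • e) = D.act X r • e + r • connAdd c X e :=
  c.d_smul_right X r e

variable (cA : Conn R V (TensorAlgebra R V) D)

/-- Leibniz extension of `∇̂_X` to `A ⊗ A`. -/
noncomputable def DT2 (X : V) :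
    TensorAlgebra R V ⊗[R] TensorAlgebra R V →+
      TensorAlgebra R V ⊗[R] TensorAlgebra R V :=
  derTensor (D.act X) (connAdd cA X) (connAdd cA X)
    (connAdd_smul cA X) (connAdd_smul cA X)

theorem DT2_smul (X : V) (r : R) (t : TensorAlgebra R V ⊗[R] TensorAlgebra R V) :
    DT2 cA X (r • t) = D.act X r • t + r • DT2 cA X t :=
  derTensor_smul _ _ _ _ _ r t

/-- Leibniz extension of `∇̂_X` to `A ⊗ (A ⊗ A)`. -/
noncomputable def DT3 (X : V) :
    TensorAlgebra R V ⊗[R] (TensorAlgebra R V ⊗[R] TensorAlgebra R V) →+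
      TensorAlgebra R V ⊗[R] (TensorAlgebra R V ⊗[R] TensorAlgebra R V) :=
  derTensor (D.act X) (connAdd cA X) (DT2 cA X)
    (connAdd_smul cA X) (DT2_smul cA X)

theorem DT3_smul (X : V) (r : R)
    (t : TensorAlgebra R V ⊗[R] (TensorAlgebra R V ⊗[R] TensorAlgebra R V)) :
    DT3 cA X (r • t) = D.act X r • t + r • DT3 cA X t :=
  derTensor_smul _ _ _ _ _ r t

/-- Leibniz extension of `∇̂_X` to `A ⊗ (A ⊗ (A ⊗ A))`. -/
noncomputable def DT4 (X : V) :
    TensorAlgebra R V ⊗[R] (TensorAlgebra R V ⊗[R]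
      (TensorAlgebra R V ⊗[R] TensorAlgebra R V)) →+
    TensorAlgebra R V ⊗[R] (TensorAlgebra R V ⊗[R]
      (TensorAlgebra R V ⊗[R] TensorAlgebra R V)) :=
  derTensor (D.act X) (connAdd cA X) (DT3 cA X)
    (connAdd_smul cA X) (DT3_smul cA X)

theorem DT2_tmul (X : V) (x y : TensorAlgebra R V) :
    DT2 cA X (x ⊗ₜ y) = cA.d X x ⊗ₜ y + x ⊗ₜ cA.d X y := rfl

theorem DT3_tmul (X : V) (x : TensorAlgebra R V)
    (t : TensorAlgebra R V ⊗[R] TensorAlgebra R V) :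
    DT3 cA X (x ⊗ₜ t) = cA.d X x ⊗ₜ t + x ⊗ₜ DT2 cA X t := rfl

theorem DT4_tmul (X : V) (x : TensorAlgebra R V)
    (t : TensorAlgebra R V ⊗[R] (TensorAlgebra R V ⊗[R] TensorAlgebra R V)) :
    DT4 cA X (x ⊗ₜ t) = cA.d X x ⊗ₜ t + x ⊗ₜ DT3 cA X t := rfl

variable {cT : Conn R V V D}

theorem DT2_mul (hA : IsDerivExt cT cA (TensorAlgebra.ι R)) (X : V)
    (s t : TensorAlgebra R V ⊗[R] TensorAlgebra R V) :
    DT2 cA X (s * t) = DT2 cA X s * t + s * DT2 cA X t := by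
  induction s using TensorProduct.induction_on with
  | zero => simp
  | tmul x y =>
    induction t using TensorProduct.induction_on with
    | zero => simp
    | tmul x' y' =>
      rw [Algebra.TensorProduct.tmul_mul_tmul, DT2_tmul, DT2_tmul, DT2_tmul,
        hA.d_mul, hA.d_mul, add_tmul, tmul_add, add_mul, mul_add,
        Algebra.TensorProduct.tmul_mul_tmul, Algebra.TensorProduct.tmul_mul_tmul,
        Algebra.TensorProduct.tmul_mul_tmul, Algebra.TensorProduct.tmul_mul_tmul]
      abel
    | add t1 t2 h1 h2 =>
      rw [mul_add, map_add, map_add, h1, h2, mul_add, mul_add]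
      abel
  | add s1 s2 h1 h2 =>
    rw [add_mul, map_add, map_add, h1, h2, add_mul, add_mul]
    abel

theorem comul_iota (x : V) :
    comul R V (TensorAlgebra.ι R x) =
      TensorAlgebra.ι R x ⊗ₜ 1 + 1 ⊗ₜ TensorAlgebra.ι R x := by
  simp [comul, TensorAlgebra.lift_ι_apply]

theorem comulL_apply (x : TensorAlgebra R V) : comulL R V x = comul R V x := rfl

theorem comulL_one : comulL R V 1 = (1 : TensorAlgebra R V) ⊗ₜ[R] (1 : TensorAlgebra R V) := by
  rw [comulL_apply, map_one, Algebra.TensorProduct.one_def]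

theorem comulL_mul_iota (X : V) (w : TensorAlgebra R V) :
    comulL R V (TensorAlgebra.ι R X * w) =
      (TensorAlgebra.ι R X ⊗ₜ 1 + 1 ⊗ₜ TensorAlgebra.ι R X) * comulL R V w := by
  rw [comulL_apply, map_mul, comul_iota, comulL_apply]

theorem coLeibniz2 (hA : IsDerivExt cT cA (TensorAlgebra.ι R)) (X : V)
    (w : TensorAlgebra R V) :
    comulL R V (cA.d X w) = DT2 cA X (comulL R V w) := by
  refine Submodule.span_induction
    (p := fun w _ => comulL R V (cA.d X w) = DT2 cA X (comulL R V w))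
    ?_ ?_ ?_ ?_ (span_prodIota_top w)
  · rintro w ⟨l, rfl⟩
    induction l with
    | nil =>
      rw [prodIota_nil, hA.d_one, map_zero, comulL_one, DT2_tmul, hA.d_one]
      simp
    | cons a l ih =>
      rw [prodIota_cons, hA.d_mul, hA.d_gen, map_add, comulL_mul_iota,
        comulL_mul_iota, ih, comulL_mul_iota, DT2_mul cA hA]
      have hg : DT2 cA X (TensorAlgebra.ι R a ⊗ₜ 1 + 1 ⊗ₜ TensorAlgebra.ι R a)
          = TensorAlgebra.ι R (cT.d X a) ⊗ₜ 1 + 1 ⊗ₜ TensorAlgebra.ι R (cT.d X a) := by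
        rw [map_add, DT2_tmul, DT2_tmul, hA.d_gen, hA.d_one]
        simp
      rw [hg]
  · simp [cA.d_zero]
  · intro x y _ _ hx hy
    rw [cA.d_add_right, map_add, hx, hy, map_add, map_add]
  · intro r x _ hx
    rw [cA.d_smul_right, map_add, map_smul, map_smul, hx, map_smul, DT2_smul]


/-- Left multiplication by `ι X` in the first slot plus in the second slot. -/
noncomputable def M2 (X : V) :
    TensorAlgebra R V ⊗[R] TensorAlgebra R V →ₗ[R]
      TensorAlgebra R V ⊗[R] TensorAlgebra R V :=
  TensorProduct.map (LinearMap.mulLeft R (TensorAlgebra.ι R X)) LinearMap.id +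
    TensorProduct.map LinearMap.id (LinearMap.mulLeft R (TensorAlgebra.ι R X))

noncomputable def M3 (X : V) :
    TensorAlgebra R V ⊗[R] (TensorAlgebra R V ⊗[R] TensorAlgebra R V) →ₗ[R]
      TensorAlgebra R V ⊗[R] (TensorAlgebra R V ⊗[R] TensorAlgebra R V) :=
  TensorProduct.map (LinearMap.mulLeft R (TensorAlgebra.ι R X)) LinearMap.id +
    TensorProduct.map LinearMap.id (M2 X)

noncomputable def M4 (X : V) :
    TensorAlgebra R V ⊗[R] (TensorAlgebra R V ⊗[R]
      (TensorAlgebra R V ⊗[R] TensorAlgebra R V)) →ₗ[R]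
    TensorAlgebra R V ⊗[R] (TensorAlgebra R V ⊗[R]
      (TensorAlgebra R V ⊗[R] TensorAlgebra R V)) :=
  TensorProduct.map (LinearMap.mulLeft R (TensorAlgebra.ι R X)) LinearMap.id +
    TensorProduct.map LinearMap.id (M3 X)

theorem M2_tmul (X : V) (x y : TensorAlgebra R V) :
    M2 X (x ⊗ₜ y) = (TensorAlgebra.ι R X * x) ⊗ₜ y + x ⊗ₜ (TensorAlgebra.ι R X * y) := by
  simp [M2, TensorProduct.map_tmul]

theorem M3_tmul (X : V) (x : TensorAlgebra R V)
    (t : TensorAlgebra R V ⊗[R] TensorAlgebra R V) :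
    M3 X (x ⊗ₜ t) = (TensorAlgebra.ι R X * x) ⊗ₜ t + x ⊗ₜ M2 X t := by
  simp [M3, TensorProduct.map_tmul]

theorem M4_tmul (X : V) (x : TensorAlgebra R V)
    (t : TensorAlgebra R V ⊗[R] (TensorAlgebra R V ⊗[R] TensorAlgebra R V)) :
    M4 X (x ⊗ₜ t) = (TensorAlgebra.ι R X * x) ⊗ₜ t + x ⊗ₜ M3 X t := by
  simp [M4, TensorProduct.map_tmul]

theorem comulL_mul_iota' (X : V) (w : TensorAlgebra R V) :
    comulL R V (TensorAlgebra.ι R X * w) = M2 X (comulL R V w) := by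
  rw [comulL_mul_iota]
  generalize comulL R V w = t
  induction t using TensorProduct.induction_on with
  | zero => rw [mul_zero, map_zero]
  | tmul x y =>
    rw [M2_tmul, add_mul, Algebra.TensorProduct.tmul_mul_tmul,
      Algebra.TensorProduct.tmul_mul_tmul, one_mul, one_mul]
  | add t1 t2 h1 h2 => rw [mul_add, h1, h2, map_add]

theorem mapid_M2 (X : V) (t : TensorAlgebra R V ⊗[R] TensorAlgebra R V) :
    TensorProduct.map LinearMap.id (comulL R V) (M2 X t) =
      M3 X (TensorProduct.map LinearMap.id (comulL R V) t) := by
  induction t using TensorProduct.induction_on with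
  | zero => rw [map_zero, map_zero, map_zero]
  | tmul x y =>
    rw [M2_tmul, map_add, TensorProduct.map_tmul, TensorProduct.map_tmul,
      TensorProduct.map_tmul, comulL_mul_iota', M3_tmul]
    simp only [LinearMap.id_coe, id_eq]
  | add t1 t2 h1 h2 => rw [map_add, map_add, h1, h2, map_add, map_add]

theorem mapmapid_M3 (X : V)
    (t : TensorAlgebra R V ⊗[R] (TensorAlgebra R V ⊗[R] TensorAlgebra R V)) :
    TensorProduct.map LinearMap.id (TensorProduct.map LinearMap.id (comulL R V))
        (M3 X t) =
      M4 X (TensorProduct.map LinearMap.id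
        (TensorProduct.map LinearMap.id (comulL R V)) t) := by
  induction t using TensorProduct.induction_on with
  | zero => rw [map_zero, map_zero, map_zero]
  | tmul x y =>
    rw [M3_tmul, map_add, TensorProduct.map_tmul, TensorProduct.map_tmul,
      TensorProduct.map_tmul, mapid_M2, M4_tmul]
    simp only [LinearMap.id_coe, id_eq]
  | add t1 t2 h1 h2 => rw [map_add, map_add, h1, h2, map_add, map_add]

theorem sweedler4_mul_iota (X : V) (w : TensorAlgebra R V) :
    sweedler4 R V (TensorAlgebra.ι R X * w) = M4 X (sweedler4 R V w) := by
  show TensorProduct.map LinearMap.id (TensorProduct.map LinearMap.id (comulL R V))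
      (TensorProduct.map LinearMap.id (comulL R V)
        (comulL R V (TensorAlgebra.ι R X * w))) = _
  rw [comulL_mul_iota', mapid_M2, mapmapid_M3]
  rfl

theorem mapid_DT2 (hA : IsDerivExt cT cA (TensorAlgebra.ι R)) (X : V)
    (s : TensorAlgebra R V ⊗[R] TensorAlgebra R V) :
    TensorProduct.map LinearMap.id (comulL R V) (DT2 cA X s) =
      DT3 cA X (TensorProduct.map LinearMap.id (comulL R V) s) := by
  induction s using TensorProduct.induction_on with
  | zero => simp
  | tmul x y =>
    rw [DT2_tmul, map_add, TensorProduct.map_tmul, TensorProduct.map_tmul,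
      TensorProduct.map_tmul, coLeibniz2 cA hA, DT3_tmul]
    simp only [LinearMap.id_coe, id_eq]
  | add s1 s2 h1 h2 => rw [map_add, map_add, h1, h2, map_add, map_add]

theorem mapmapid_DT3 (hA : IsDerivExt cT cA (TensorAlgebra.ι R)) (X : V)
    (s : TensorAlgebra R V ⊗[R] (TensorAlgebra R V ⊗[R] TensorAlgebra R V)) :
    TensorProduct.map LinearMap.id (TensorProduct.map LinearMap.id (comulL R V))
        (DT3 cA X s) =
      DT4 cA X (TensorProduct.map LinearMap.id
        (TensorProduct.map LinearMap.id (comulL R V)) s) := by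
  induction s using TensorProduct.induction_on with
  | zero => simp
  | tmul x t =>
    rw [DT3_tmul, map_add, TensorProduct.map_tmul, TensorProduct.map_tmul,
      TensorProduct.map_tmul, mapid_DT2 cA hA, DT4_tmul]
    simp only [LinearMap.id_coe, id_eq]
  | add s1 s2 h1 h2 => rw [map_add, map_add, h1, h2, map_add, map_add]

theorem coLeibniz4 (hA : IsDerivExt cT cA (TensorAlgebra.ι R)) (X : V)
    (w : TensorAlgebra R V) :
    sweedler4 R V (cA.d X w) = DT4 cA X (sweedler4 R V w) := by
  show TensorProduct.map LinearMap.id (TensorProduct.map LinearMap.id (comulL R V))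
      (TensorProduct.map LinearMap.id (comulL R V) (comulL R V (cA.d X w))) = _
  rw [coLeibniz2 cA hA, mapid_DT2 cA hA, mapmapid_DT3 cA hA]
  rfl

theorem sweedler4_one :
    sweedler4 R V (1 : TensorAlgebra R V) =
      (1 : TensorAlgebra R V) ⊗ₜ ((1 : TensorAlgebra R V) ⊗ₜ
        ((1 : TensorAlgebra R V) ⊗ₜ (1 : TensorAlgebra R V))) := by
  show TensorProduct.map LinearMap.id (TensorProduct.map LinearMap.id (comulL R V))
      (TensorProduct.map LinearMap.id (comulL R V) (comulL R V 1)) = _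
  rw [comulL_one]
  simp only [TensorProduct.map_tmul, LinearMap.id_coe, id_eq, comulL_one]

end CoLeibniz
/-- Fundamental Commutation Lemma.  Suppose `∇̂` is torsion-free.
For tensor fields `u, v` and vector fields `a, b` one has the equality of operators
on `C^∞(E)`:
`∇_{u₍₁₎ ⊗ ∇̂_{u₍₂₎}((a⊗b − b⊗a)⊗v)} =
   (∇_{u₍₁₎} R^E)_{∇̂_{u₍₂₎}(a⊗b)} ∘ ∇_{u₍₃₎ ⊗ ∇̂_{u₍₄₎} v}
   − ∇_{u₍₁₎ ⊗ (∇̂_{u₍₂₎} R^{TM})_{∇̂_{u₍₃₎}(a⊗b)}(∇̂_{u₍₄₎} v)}`.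
Here `N`, `NA` are the tensorial higher covariant derivatives on `E` and on tensor
fields, `REsec : HomE` and `RTMsec : HomT` are the curvature tensors `R^E`, `R^{TM}`
viewed as sections of the Hom-bundles `Hom(⊗²TM, End E)` and
`Hom(⊗²TM, End(⊗TM))` (with `RTMsec` acting on tensor fields as a derivation),
`cHE`, `cHT` are the induced connections on these Hom-bundles and `NHE`, `NHT`
their tensorial higher covariant derivatives. -/
theorem statement10
    {R : Type*} [CommRing R] [Algebra ℝ R]
    {V : Type*} [AddCommGroup V] [Module R V]
    {E : Type*} [AddCommGroup E] [Module R E]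
    {D : VFAct R V} (cT : Conn R V V D) (cE : Conn R V E D)
    (htf : TorsionFree cT)
    (cA : Conn R V (TensorAlgebra R V) D)
    (hA : IsDerivExt cT cA (TensorAlgebra.ι R))
    (N : TensorAlgebra R V →ₗ[R] E → E) (hN : IsHigherDeriv cE cA N)
    (NA : TensorAlgebra R V →ₗ[R] TensorAlgebra R V → TensorAlgebra R V)
    (hNA : IsHigherDeriv cA cA NA)
    -- the curvature tensor of `E` as a section of `Hom(⊗²TM, End E)`
    (cHE : Conn R V (TensorAlgebra R V →ₗ[R] (E →ₗ[R] E)) D)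
    (hHE : ∀ (X : V) (T : TensorAlgebra R V →ₗ[R] (E →ₗ[R] E))
      (w : TensorAlgebra R V) (α : E),
      cHE.d X T w α = cE.d X (T w α) - T w (cE.d X α) - T (cA.d X w) α)
    (NHE : TensorAlgebra R V →ₗ[R]
      (TensorAlgebra R V →ₗ[R] (E →ₗ[R] E)) → (TensorAlgebra R V →ₗ[R] (E →ₗ[R] E)))
    (hNHE : IsHigherDeriv cHE cA NHE)
    (REsec : TensorAlgebra R V →ₗ[R] (E →ₗ[R] E))
    (hRE : ∀ (a b : V) (α : E),
      REsec (TensorAlgebra.ι R a * TensorAlgebra.ι R b) α =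
        N (TensorAlgebra.ι R a * TensorAlgebra.ι R b) α
          - N (TensorAlgebra.ι R b * TensorAlgebra.ι R a) α)
    -- the curvature tensor of `TM` as a section of `Hom(⊗²TM, End(⊗TM))`,
    -- acting on tensor fields as a derivation
    (cHT : Conn R V (TensorAlgebra R V →ₗ[R]
      (TensorAlgebra R V →ₗ[R] TensorAlgebra R V)) D)
    (hHT : ∀ (X : V)
      (T : TensorAlgebra R V →ₗ[R] (TensorAlgebra R V →ₗ[R] TensorAlgebra R V))
      (w x : TensorAlgebra R V),
      cHT.d X T w x = cA.d X (T w x) - T w (cA.d X x) - T (cA.d X w) x)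
    (NHT : TensorAlgebra R V →ₗ[R]
      (TensorAlgebra R V →ₗ[R] (TensorAlgebra R V →ₗ[R] TensorAlgebra R V)) →
        (TensorAlgebra R V →ₗ[R] (TensorAlgebra R V →ₗ[R] TensorAlgebra R V)))
    (hNHT : IsHigherDeriv cHT cA NHT)
    (RTMsec : TensorAlgebra R V →ₗ[R]
      (TensorAlgebra R V →ₗ[R] TensorAlgebra R V))
    (hRTM : ∀ (a b c : V),
      RTMsec (TensorAlgebra.ι R a * TensorAlgebra.ι R b) (TensorAlgebra.ι R c) =
        NA (TensorAlgebra.ι R a * TensorAlgebra.ι R b) (TensorAlgebra.ι R c)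
          - NA (TensorAlgebra.ι R b * TensorAlgebra.ι R a) (TensorAlgebra.ι R c))
    (hRTMderiv : ∀ (w x y : TensorAlgebra R V),
      RTMsec w (x * y) = RTMsec w x * y + x * RTMsec w y)
    (hRTMconst : ∀ (w : TensorAlgebra R V) (f : R),
      RTMsec w (algebraMap R (TensorAlgebra R V) f) = 0) :
    ∀ (u v : TensorAlgebra R V) (a b : V) (α : E),
      -- LHS : `∇_{u₍₁₎ ⊗ ∇̂_{u₍₂₎}((ab − ba) ⊗ v)} α`
      (((LinearMap.proj α : (E → E) →ₗ[R] E).comp N).comp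
          ((LinearMap.mul' R (TensorAlgebra R V)).comp
            (TensorProduct.map LinearMap.id
              ((LinearMap.proj
                  ((TensorAlgebra.ι R a * TensorAlgebra.ι R b
                    - TensorAlgebra.ι R b * TensorAlgebra.ι R a) * v) :
                  (TensorAlgebra R V → TensorAlgebra R V) →ₗ[R]
                    TensorAlgebra R V).comp NA))))
        (comulL R V u)
      =
      -- first RHS term : `(∇_{u₍₁₎} R^E)_{∇̂_{u₍₂₎}(ab)} (∇_{u₍₃₎ ⊗ ∇̂_{u₍₄₎} v} α)`
      ((TensorProduct.lift
          ((TensorProduct.lift.equiv (RingHom.id R) (TensorAlgebra R V) E E).toLinearMap)).comp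
        (TensorProduct.map
          ((LinearMap.proj REsec :
              ((TensorAlgebra R V →ₗ[R] (E →ₗ[R] E)) →
                (TensorAlgebra R V →ₗ[R] (E →ₗ[R] E))) →ₗ[R]
                  (TensorAlgebra R V →ₗ[R] (E →ₗ[R] E))).comp NHE)
          (TensorProduct.map
            ((LinearMap.proj (TensorAlgebra.ι R a * TensorAlgebra.ι R b) :
                (TensorAlgebra R V → TensorAlgebra R V) →ₗ[R]
                  TensorAlgebra R V).comp NA)
            (((LinearMap.proj α : (E → E) →ₗ[R] E).comp N).comp
              ((LinearMap.mul' R (TensorAlgebra R V)).comp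
                (TensorProduct.map LinearMap.id
                  ((LinearMap.proj v :
                      (TensorAlgebra R V → TensorAlgebra R V) →ₗ[R]
                        TensorAlgebra R V).comp NA)))))))
        (sweedler4 R V u)
      -
      -- second RHS term : `∇_{u₍₁₎ ⊗ (∇̂_{u₍₂₎} R^{TM})_{∇̂_{u₍₃₎}(ab)}(∇̂_{u₍₄₎} v)} α`
      (((LinearMap.proj α : (E → E) →ₗ[R] E).comp N).comp
          ((LinearMap.mul' R (TensorAlgebra R V)).comp
            (TensorProduct.map LinearMap.id
              ((TensorProduct.lift
                  ((TensorProduct.lift.equiv (RingHom.id R) (TensorAlgebra R V)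
                    (TensorAlgebra R V) (TensorAlgebra R V)).toLinearMap)).comp
                (TensorProduct.map
                  ((LinearMap.proj RTMsec :
                      ((TensorAlgebra R V →ₗ[R]
                          (TensorAlgebra R V →ₗ[R] TensorAlgebra R V)) →
                        (TensorAlgebra R V →ₗ[R]
                          (TensorAlgebra R V →ₗ[R] TensorAlgebra R V))) →ₗ[R]
                        (TensorAlgebra R V →ₗ[R]
                          (TensorAlgebra R V →ₗ[R] TensorAlgebra R V))).comp NHT)
                  (TensorProduct.map
                    ((LinearMap.proj (TensorAlgebra.ι R a * TensorAlgebra.ι R b) :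
                        (TensorAlgebra R V → TensorAlgebra R V) →ₗ[R]
                          TensorAlgebra R V).comp NA)
                    ((LinearMap.proj v :
                        (TensorAlgebra R V → TensorAlgebra R V) →ₗ[R]
                          TensorAlgebra R V).comp NA)))))))
        (sweedler4 R V u) := by

  intro u v a b α
  -- abbreviations for the three operator-valued linear maps appearing in the statement
  set Φ1 : TensorAlgebra R V ⊗[R] TensorAlgebra R V →ₗ[R] E :=
    (((LinearMap.proj α : (E → E) →ₗ[R] E).comp N).comp
        ((LinearMap.mul' R (TensorAlgebra R V)).comp
          (TensorProduct.map LinearMap.id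
            ((LinearMap.proj
                ((TensorAlgebra.ι R a * TensorAlgebra.ι R b
                  - TensorAlgebra.ι R b * TensorAlgebra.ι R a) * v) :
                (TensorAlgebra R V → TensorAlgebra R V) →ₗ[R]
                  TensorAlgebra R V).comp NA)))) with hΦ1
  set Φ2 : TensorAlgebra R V ⊗[R] (TensorAlgebra R V ⊗[R]
      (TensorAlgebra R V ⊗[R] TensorAlgebra R V)) →ₗ[R] E :=
    ((TensorProduct.lift
        ((TensorProduct.lift.equiv (RingHom.id R) (TensorAlgebra R V) E E).toLinearMap)).comp
      (TensorProduct.map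
        ((LinearMap.proj REsec :
            ((TensorAlgebra R V →ₗ[R] (E →ₗ[R] E)) →
              (TensorAlgebra R V →ₗ[R] (E →ₗ[R] E))) →ₗ[R]
                (TensorAlgebra R V →ₗ[R] (E →ₗ[R] E))).comp NHE)
        (TensorProduct.map
          ((LinearMap.proj (TensorAlgebra.ι R a * TensorAlgebra.ι R b) :
              (TensorAlgebra R V → TensorAlgebra R V) →ₗ[R]
                TensorAlgebra R V).comp NA)
          (((LinearMap.proj α : (E → E) →ₗ[R] E).comp N).comp
            ((LinearMap.mul' R (TensorAlgebra R V)).comp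
              (TensorProduct.map LinearMap.id
                ((LinearMap.proj v :
                    (TensorAlgebra R V → TensorAlgebra R V) →ₗ[R]
                      TensorAlgebra R V).comp NA))))))) with hΦ2
  set Φ3 : TensorAlgebra R V ⊗[R] (TensorAlgebra R V ⊗[R]
      (TensorAlgebra R V ⊗[R] TensorAlgebra R V)) →ₗ[R] E :=
    (((LinearMap.proj α : (E → E) →ₗ[R] E).comp N).comp
        ((LinearMap.mul' R (TensorAlgebra R V)).comp
          (TensorProduct.map LinearMap.id
            ((TensorProduct.lift
                ((TensorProduct.lift.equiv (RingHom.id R) (TensorAlgebra R V)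
                  (TensorAlgebra R V) (TensorAlgebra R V)).toLinearMap)).comp
              (TensorProduct.map
                ((LinearMap.proj RTMsec :
                    ((TensorAlgebra R V →ₗ[R]
                        (TensorAlgebra R V →ₗ[R] TensorAlgebra R V)) →
                      (TensorAlgebra R V →ₗ[R]
                        (TensorAlgebra R V →ₗ[R] TensorAlgebra R V))) →ₗ[R]
                      (TensorAlgebra R V →ₗ[R]
                        (TensorAlgebra R V →ₗ[R] TensorAlgebra R V))).comp NHT)
                (TensorProduct.map
                  ((LinearMap.proj (TensorAlgebra.ι R a * TensorAlgebra.ι R b) :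
                      (TensorAlgebra R V → TensorAlgebra R V) →ₗ[R]
                        TensorAlgebra R V).comp NA)
                  ((LinearMap.proj v :
                      (TensorAlgebra R V → TensorAlgebra R V) →ₗ[R]
                        TensorAlgebra R V).comp NA))))))) with hΦ3
  -- evaluation on pure tensors
  have hΦ1t : ∀ x y : TensorAlgebra R V,
      Φ1 (x ⊗ₜ y) =
        N (x * NA y ((TensorAlgebra.ι R a * TensorAlgebra.ι R b
          - TensorAlgebra.ι R b * TensorAlgebra.ι R a) * v)) α := by
    intro x y
    rw [hΦ1]
    simp [TensorProduct.map_tmul, LinearMap.mul'_apply]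
  have hΦ2t : ∀ (x y z p : TensorAlgebra R V),
      Φ2 (x ⊗ₜ (y ⊗ₜ (z ⊗ₜ p))) =
        NHE x REsec (NA y (TensorAlgebra.ι R a * TensorAlgebra.ι R b))
          (N (z * NA p v) α) := by
    intro x y z p
    rw [hΦ2]
    simp [TensorProduct.map_tmul, TensorProduct.lift.tmul, LinearMap.mul'_apply]
  have hΦ3t : ∀ (x y z p : TensorAlgebra R V),
      Φ3 (x ⊗ₜ (y ⊗ₜ (z ⊗ₜ p))) =
        N (x * NHT y RTMsec (NA z (TensorAlgebra.ι R a * TensorAlgebra.ι R b))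
          (NA p v)) α := by
    intro x y z p
    rw [hΦ3]
    simp [TensorProduct.map_tmul, TensorProduct.lift.tmul, LinearMap.mul'_apply]
  -- the curvature of `E` on sections
  have L1 : ∀ β : E, REsec (TensorAlgebra.ι R a * TensorAlgebra.ι R b) β =
      cE.d a (cE.d b β) - cE.d b (cE.d a β)
        - cE.d (cT.d a b) β + cE.d (cT.d b a) β := by
    intro β
    rw [hRE, ihd_iota2 hN hA a b β, ihd_iota2 hN hA b a β]
    abel
  -- the curvature of `TM` on all tensor fields
  have L2 : ∀ x : TensorAlgebra R V,
      RTMsec (TensorAlgebra.ι R a * TensorAlgebra.ι R b) x =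
        cA.d a (cA.d b x) - cA.d b (cA.d a x)
          - cA.d (cT.d a b) x + cA.d (cT.d b a) x := by
    intro x
    induction x using TensorAlgebra.induction with
    | algebraMap f =>
      have e1 : ∀ (X : V) (g : R), cA.d X (g • (1 : TensorAlgebra R V))
          = D.act X g • (1 : TensorAlgebra R V) := by
        intro X g
        rw [cA.d_smul_right, hA.d_one, smul_zero, add_zero]
      rw [hRTMconst, Algebra.algebraMap_eq_smul_one, e1, e1, e1, e1, e1, e1]
      rw [← sub_smul, ← sub_smul, ← add_smul]
      have h := htf a b f
      rw [VFAct.act_sub_left] at h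
      have hc : D.act a (D.act b f) - D.act b (D.act a f)
          - D.act (cT.d a b) f + D.act (cT.d b a) f = 0 := by
        rw [← h]; ring
      rw [hc, zero_smul]
    | ι c =>
      rw [hRTM, ihd_iota2 hNA hA a b, ihd_iota2 hNA hA b a]
      abel
    | mul x y ihx ihy =>
      rw [hRTMderiv, ihx, ihy]
      simp only [hA.d_mul, cA.d_add_right, sub_mul, add_mul, mul_sub, mul_add]
      abel
    | add x y ihx ihy =>
      simp only [map_add, cA.d_add_right, ihx, ihy]
      abel
  -- basic expansion lemma
  have hmulL : ∀ (X : V) (x w' : TensorAlgebra R V),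
      N ((TensorAlgebra.ι R X * x) * w') α =
        cE.d X (N (x * w') α) - N (cA.d X x * w') α - N (x * cA.d X w') α := by
    intro X x w'
    rw [mul_assoc, hN.n_mul_ι, hA.d_mul, lmap_pi_add]
    abel
  have hNvv : ∀ (p q : V) (x : TensorAlgebra R V),
      N (TensorAlgebra.ι R p * (TensorAlgebra.ι R q * x)) α =
        cE.d p (cE.d q (N x α)) - cE.d p (N (cA.d q x) α)
          - cE.d (cT.d p q) (N x α) + N (cA.d (cT.d p q) x) α
          - cE.d q (N (cA.d p x) α) + N (cA.d q (cA.d p x)) α := by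
    intro p q x
    rw [hN.n_mul_ι, hN.n_mul_ι, hA.d_mul, hA.d_gen, lmap_pi_add,
      hN.n_mul_ι, hN.n_mul_ι, cE.d_sub_right]
    abel
  -- the fundamental base identity
  have L3 :
      N ((TensorAlgebra.ι R a * TensorAlgebra.ι R b
          - TensorAlgebra.ι R b * TensorAlgebra.ι R a) * v) α =
        REsec (TensorAlgebra.ι R a * TensorAlgebra.ι R b) (N v α)
          - N (RTMsec (TensorAlgebra.ι R a * TensorAlgebra.ι R b) v) α := by
    rw [sub_mul, lmap_pi_sub, mul_assoc, mul_assoc, hNvv a b v, hNvv b a v,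
      L1 (N v α), L2 v, lmap_pi_add, lmap_pi_sub, lmap_pi_sub]
    abel
  -- recursion for the left-hand side
  have recF : ∀ (X : V) (w : TensorAlgebra R V),
      Φ1 (comulL R V (TensorAlgebra.ι R X * w)) =
        cE.d X (Φ1 (comulL R V w)) - Φ1 (comulL R V (cA.d X w)) := by
    intro X w
    rw [comulL_mul_iota', coLeibniz2 cA hA]
    generalize comulL R V w = t
    induction t using TensorProduct.induction_on with
    | zero => rw [map_zero, map_zero, map_zero, map_zero, cE.d_zero, sub_zero]
    | tmul x y =>
      rw [M2_tmul, DT2_tmul, map_add, map_add, hΦ1t, hΦ1t, hΦ1t, hΦ1t, hΦ1t]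
      have h2 : N (x * NA (TensorAlgebra.ι R X * y)
            ((TensorAlgebra.ι R a * TensorAlgebra.ι R b
              - TensorAlgebra.ι R b * TensorAlgebra.ι R a) * v)) α =
          N (x * cA.d X (NA y ((TensorAlgebra.ι R a * TensorAlgebra.ι R b
              - TensorAlgebra.ι R b * TensorAlgebra.ι R a) * v))) α
            - N (x * NA (cA.d X y) ((TensorAlgebra.ι R a * TensorAlgebra.ι R b
              - TensorAlgebra.ι R b * TensorAlgebra.ι R a) * v)) α := by
        rw [hNA.n_mul_ι, mul_sub, lmap_pi_sub]
      rw [hmulL, h2]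
      abel
    | add t1 t2 h1 h2 =>
      simp only [map_add, cE.d_add_right, h1, h2]
      abel
  -- recursion for the first right-hand term
  have recG2 : ∀ (X : V) (w : TensorAlgebra R V),
      Φ2 (sweedler4 R V (TensorAlgebra.ι R X * w)) =
        cE.d X (Φ2 (sweedler4 R V w)) - Φ2 (sweedler4 R V (cA.d X w)) := by
    intro X w
    rw [sweedler4_mul_iota, coLeibniz4 cA hA]
    generalize sweedler4 R V w = t
    induction t using TensorProduct.induction_on with
    | zero => rw [map_zero, map_zero, map_zero, map_zero, cE.d_zero, sub_zero]
    | tmul x t =>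
      induction t using TensorProduct.induction_on with
      | zero =>
        rw [TensorProduct.tmul_zero, map_zero, map_zero, map_zero, map_zero,
          cE.d_zero, sub_zero]
      | tmul y s =>
        induction s using TensorProduct.induction_on with
        | zero =>
          rw [TensorProduct.tmul_zero, TensorProduct.tmul_zero, map_zero,
            map_zero, map_zero, map_zero, cE.d_zero, sub_zero]
        | tmul z p =>
          rw [M4_tmul, M3_tmul, M2_tmul, DT4_tmul, DT3_tmul, DT2_tmul]
          simp only [TensorProduct.tmul_add, map_add, hΦ2t]
          have hT1 : NHE (TensorAlgebra.ι R X * x) REsec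
                (NA y (TensorAlgebra.ι R a * TensorAlgebra.ι R b))
                (N (z * NA p v) α) =
              cE.d X (NHE x REsec
                  (NA y (TensorAlgebra.ι R a * TensorAlgebra.ι R b))
                  (N (z * NA p v) α))
                - NHE x REsec
                  (NA y (TensorAlgebra.ι R a * TensorAlgebra.ι R b))
                  (cE.d X (N (z * NA p v) α))
                - NHE x REsec
                  (cA.d X (NA y (TensorAlgebra.ι R a * TensorAlgebra.ι R b)))
                  (N (z * NA p v) α)
                - NHE (cA.d X x) REsec
                  (NA y (TensorAlgebra.ι R a * TensorAlgebra.ι R b))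
                  (N (z * NA p v) α) := by
            rw [hNHE.n_mul_ι, LinearMap.sub_apply, LinearMap.sub_apply, hHE]
          have hT2 : NHE x REsec
                (NA (TensorAlgebra.ι R X * y)
                  (TensorAlgebra.ι R a * TensorAlgebra.ι R b))
                (N (z * NA p v) α) =
              NHE x REsec
                  (cA.d X (NA y (TensorAlgebra.ι R a * TensorAlgebra.ι R b)))
                  (N (z * NA p v) α)
                - NHE x REsec
                  (NA (cA.d X y) (TensorAlgebra.ι R a * TensorAlgebra.ι R b))
                  (N (z * NA p v) α) := by
            rw [hNA.n_mul_ι, map_sub, LinearMap.sub_apply]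
          have hT3 : N ((TensorAlgebra.ι R X * z) * NA p v) α =
              cE.d X (N (z * NA p v) α) - N (cA.d X z * NA p v) α
                - N (z * cA.d X (NA p v)) α := hmulL X z (NA p v)
          have hT4 : N (z * NA (TensorAlgebra.ι R X * p) v) α =
              N (z * cA.d X (NA p v)) α - N (z * NA (cA.d X p) v) α := by
            rw [hNA.n_mul_ι, mul_sub, lmap_pi_sub]
          rw [hT1, hT2, hT3, hT4, map_sub, map_sub, map_sub]
          abel
        | add s1 s2 hs1 hs2 =>
          simp only [TensorProduct.tmul_add, map_add, cE.d_add_right, hs1, hs2]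
          abel
      | add t1 t2 h1 h2 =>
        simp only [TensorProduct.tmul_add, map_add, cE.d_add_right, h1, h2]
        abel
    | add t1 t2 h1 h2 =>
      simp only [map_add, cE.d_add_right, h1, h2]
      abel
  -- recursion for the second right-hand term
  have recG3 : ∀ (X : V) (w : TensorAlgebra R V),
      Φ3 (sweedler4 R V (TensorAlgebra.ι R X * w)) =
        cE.d X (Φ3 (sweedler4 R V w)) - Φ3 (sweedler4 R V (cA.d X w)) := by
    intro X w
    rw [sweedler4_mul_iota, coLeibniz4 cA hA]
    generalize sweedler4 R V w = t
    induction t using TensorProduct.induction_on with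
    | zero => rw [map_zero, map_zero, map_zero, map_zero, cE.d_zero, sub_zero]
    | tmul x t =>
      induction t using TensorProduct.induction_on with
      | zero =>
        rw [TensorProduct.tmul_zero, map_zero, map_zero, map_zero, map_zero,
          cE.d_zero, sub_zero]
      | tmul y s =>
        induction s using TensorProduct.induction_on with
        | zero =>
          rw [TensorProduct.tmul_zero, TensorProduct.tmul_zero, map_zero,
            map_zero, map_zero, map_zero, cE.d_zero, sub_zero]
        | tmul z p =>
          rw [M4_tmul, M3_tmul, M2_tmul, DT4_tmul, DT3_tmul, DT2_tmul]
          simp only [TensorProduct.tmul_add, map_add, hΦ3t]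
          have hS1 : N ((TensorAlgebra.ι R X * x) *
                NHT y RTMsec (NA z (TensorAlgebra.ι R a * TensorAlgebra.ι R b))
                  (NA p v)) α =
              cE.d X (N (x * NHT y RTMsec
                  (NA z (TensorAlgebra.ι R a * TensorAlgebra.ι R b))
                  (NA p v)) α)
                - N (cA.d X x * NHT y RTMsec
                  (NA z (TensorAlgebra.ι R a * TensorAlgebra.ι R b))
                  (NA p v)) α
                - N (x * cA.d X (NHT y RTMsec
                  (NA z (TensorAlgebra.ι R a * TensorAlgebra.ι R b))
                  (NA p v))) α := hmulL X x _
          have hS2 : NHT (TensorAlgebra.ι R X * y) RTMsec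
                (NA z (TensorAlgebra.ι R a * TensorAlgebra.ι R b)) (NA p v) =
              cA.d X (NHT y RTMsec
                  (NA z (TensorAlgebra.ι R a * TensorAlgebra.ι R b)) (NA p v))
                - NHT y RTMsec
                  (NA z (TensorAlgebra.ι R a * TensorAlgebra.ι R b))
                  (cA.d X (NA p v))
                - NHT y RTMsec
                  (cA.d X (NA z (TensorAlgebra.ι R a * TensorAlgebra.ι R b)))
                  (NA p v)
                - NHT (cA.d X y) RTMsec
                  (NA z (TensorAlgebra.ι R a * TensorAlgebra.ι R b))
                  (NA p v) := by
            rw [hNHT.n_mul_ι, LinearMap.sub_apply, LinearMap.sub_apply, hHT]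
          have hS3 : NHT y RTMsec
                (NA (TensorAlgebra.ι R X * z)
                  (TensorAlgebra.ι R a * TensorAlgebra.ι R b)) (NA p v) =
              NHT y RTMsec
                  (cA.d X (NA z (TensorAlgebra.ι R a * TensorAlgebra.ι R b)))
                  (NA p v)
                - NHT y RTMsec
                  (NA (cA.d X z) (TensorAlgebra.ι R a * TensorAlgebra.ι R b))
                  (NA p v) := by
            rw [hNA.n_mul_ι, map_sub, LinearMap.sub_apply]
          have hS4 : NHT y RTMsec
                (NA z (TensorAlgebra.ι R a * TensorAlgebra.ι R b))
                (NA (TensorAlgebra.ι R X * p) v) =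
              NHT y RTMsec
                  (NA z (TensorAlgebra.ι R a * TensorAlgebra.ι R b))
                  (cA.d X (NA p v))
                - NHT y RTMsec
                  (NA z (TensorAlgebra.ι R a * TensorAlgebra.ι R b))
                  (NA (cA.d X p) v) := by
            rw [hNA.n_mul_ι, map_sub]
          rw [hS1, hS2, hS3, hS4]
          simp only [mul_sub, lmap_pi_sub]
          abel
        | add s1 s2 hs1 hs2 =>
          simp only [TensorProduct.tmul_add, map_add, cE.d_add_right, hs1, hs2]
          abel
      | add t1 t2 h1 h2 =>
        simp only [TensorProduct.tmul_add, map_add, cE.d_add_right, h1, h2]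
        abel
    | add t1 t2 h1 h2 =>
      simp only [map_add, cE.d_add_right, h1, h2]
      abel
  -- assemble via the uniqueness lemma
  have main : Φ1.comp (comulL R V) =
      Φ2.comp (sweedler4 R V) - Φ3.comp (sweedler4 R V) := by
    refine rec_unique hA cE _ _ ?_ ?_ ?_
    · -- base case
      simp only [LinearMap.comp_apply, LinearMap.sub_apply]
      rw [comulL_one, sweedler4_one, hΦ1t, hΦ2t, hΦ3t, ihd_one hNA,
        ihd_one hNA, ihd_one hNA, ihd_one hNHE, ihd_one hNHT,
        one_mul, one_mul, one_mul, L3]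
    · intro X w
      simp only [LinearMap.comp_apply]
      exact recF X w
    · intro X w
      simp only [LinearMap.comp_apply, LinearMap.sub_apply]
      rw [recG2 X w, recG3 X w, cE.d_sub_right]
      abel
  have := DFunLike.congr_fun main u
  simpa only [LinearMap.comp_apply, LinearMap.sub_apply] using this
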